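/- Let S, Ŝ be symmetric positive semidefinite matrices and λ > 0 with ‖(S+λI)^{-1/2}(Ŝ−S)(S+λI)^{-1/2}‖ ≤ ε < 1. Then for any symmetric matrix M, ‖(Ŝ+λI)^{-1/2} M (Ŝ+λI)^{-1/2}‖ ≤ (1−ε)^{-1}·‖(S+λI)^{-1/2} M (S+λI)^{-1/2}‖. -/

import Mathlib

open Matrix
open scoped Matrix.Norms.L2Operator

/-- The positive semidefinite square root of a matrix (junk value `0` if the
matrix is not positive semidefinite). -/
noncomputable def msqrt {d : ℕ} (M : Matrix (Fin d) (Fin d) ℝ) :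
    Matrix (Fin d) (Fin d) ℝ := by
  classical exact if h : M.PosSemidef then
    (h.1.eigenvectorUnitary : Matrix (Fin d) (Fin d) ℝ) *
      diagonal (Real.sqrt ∘ h.1.eigenvalues) *
      (star h.1.eigenvectorUnitary : Matrix (Fin d) (Fin d) ℝ) else 0

/-- The inverse square root `M^{-1/2}` of a positive semidefinite matrix. -/
noncomputable def minvSqrt {d : ℕ} (M : Matrix (Fin d) (Fin d) ℝ) :
    Matrix (Fin d) (Fin d) ℝ :=
  (msqrt M)⁻¹

/-- Loewner order: `A ⪯ B` iff `B - A` is positive semidefinite. -/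
def Loewner {d : ℕ} (A B : Matrix (Fin d) (Fin d) ℝ) : Prop :=
  (B - A).PosSemidef

/-! Write `A = S + λI`, `B = Ŝ + λI` and `T = B^{-1/2} A^{1/2}`. Then
`B^{-1/2} M B^{-1/2} = T (A^{-1/2} M A^{-1/2}) T*`, so the C*-identity bounds the left side by
`‖T* T‖ ‖A^{-1/2} M A^{-1/2}‖`, and `T* T = A^{1/2} B^{-1} A^{1/2}` is the inverse of
`A^{-1/2} B A^{-1/2} = 1 + E` with `‖E‖ ≤ ε < 1`, whence `‖T* T‖ ≤ (1 - ε)⁻¹`. -/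

theorem CStarRing.norm_one_le {E : Type*} [NormedRing E] [StarRing E] [CStarRing E] :
    ‖(1 : E)‖ ≤ 1 := by
  rcases subsingleton_or_nontrivial E with _ | _
  · simp [Subsingleton.elim (1 : E) 0]
  · exact CStarRing.norm_one.le

theorem CStarRing.norm_mul_mul_star_le {E : Type*} [NonUnitalNormedRing E] [StarRing E]
    [CStarRing E] (t n : E) : ‖t * n * star t‖ ≤ ‖star t * t‖ * ‖n‖ :=
  calc ‖t * n * star t‖ ≤ ‖t‖ * ‖n‖ * ‖star t‖ := norm_mul₃_le
    _ = ‖star t * t‖ * ‖n‖ := by rw [norm_star, CStarRing.norm_star_mul_self]; ring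

theorem norm_le_inv_one_sub_of_one_add_mul_eq_one {R : Type*} [SeminormedRing R]
    {e x : R} {ε : ℝ} (h1 : ‖(1 : R)‖ ≤ 1) (he : ‖e‖ ≤ ε) (hε : ε < 1)
    (hx : (1 + e) * x = 1) : ‖x‖ ≤ (1 - ε)⁻¹ := by
  have hx' : x = 1 - e * x := by rw [← hx, add_mul, one_mul, add_sub_cancel_right]
  have hbound : ‖x‖ ≤ 1 + ε * ‖x‖ :=
    calc ‖x‖ = ‖1 - e * x‖ := by rw [← hx']
      _ ≤ ‖(1 : R)‖ + ‖e * x‖ := norm_sub_le _ _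
      _ ≤ 1 + ε * ‖x‖ := by gcongr; exact (norm_mul_le _ _).trans (by gcongr)
  rw [inv_eq_one_div, le_div_iff₀ (by linarith)]
  linarith

section MatrixSqrt

variable {d : ℕ} {A B : Matrix (Fin d) (Fin d) ℝ}

theorem msqrt_of_posSemidef (hA : A.PosSemidef) :
    msqrt A = (hA.1.eigenvectorUnitary : Matrix (Fin d) (Fin d) ℝ) *
      diagonal (Real.sqrt ∘ hA.1.eigenvalues) *
      (star hA.1.eigenvectorUnitary : Matrix (Fin d) (Fin d) ℝ) := by
  rw [msqrt, dif_pos hA]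

theorem msqrt_mul_self (hA : A.PosSemidef) : msqrt A * msqrt A = A := by
  have hD : diagonal (Real.sqrt ∘ hA.1.eigenvalues) * diagonal (Real.sqrt ∘ hA.1.eigenvalues)
      = diagonal (RCLike.ofReal ∘ hA.1.eigenvalues) := by
    rw [diagonal_mul_diagonal]
    congr 1
    funext i
    exact Real.mul_self_sqrt (hA.eigenvalues_nonneg i)
  conv_rhs => rw [hA.1.spectral_theorem, Unitary.conjStarAlgAut_apply, ← hD]
  rw [msqrt_of_posSemidef hA]
  simp only [Matrix.mul_assoc]
  rw [← Matrix.mul_assoc (star _) _ (diagonal _ * _), Unitary.coe_star_mul_self, Matrix.one_mul]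

theorem isHermitian_msqrt (A : Matrix (Fin d) (Fin d) ℝ) : (msqrt A).IsHermitian := by
  by_cases hA : A.PosSemidef
  · rw [msqrt_of_posSemidef hA, IsHermitian]
    simp only [Matrix.star_eq_conjTranspose, Matrix.conjTranspose_mul,
      Matrix.conjTranspose_conjTranspose, Matrix.diagonal_conjTranspose, star_trivial,
      Matrix.mul_assoc]
  · rw [msqrt, dif_neg hA]
    exact isHermitian_zero

theorem isHermitian_minvSqrt (A : Matrix (Fin d) (Fin d) ℝ) : (minvSqrt A).IsHermitian :=
  (isHermitian_msqrt A).inv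

theorem isUnit_det_msqrt (hA : A.PosDef) : IsUnit (msqrt A).det :=
  (isUnit_iff_isUnit_det _).mp <|
    isUnit_of_mul_isUnit_left (y := msqrt A) <| by
      rw [msqrt_mul_self hA.posSemidef]
      exact hA.isUnit

theorem minvSqrt_mul_msqrt (hA : A.PosDef) : minvSqrt A * msqrt A = 1 :=
  nonsing_inv_mul _ (isUnit_det_msqrt hA)

theorem msqrt_mul_minvSqrt (hA : A.PosDef) : msqrt A * minvSqrt A = 1 :=
  mul_nonsing_inv _ (isUnit_det_msqrt hA)

theorem minvSqrt_mul_self (hA : A.PosSemidef) : minvSqrt A * minvSqrt A = A⁻¹ := by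
  rw [minvSqrt, ← Matrix.mul_inv_rev, msqrt_mul_self hA]

theorem minvSqrt_mul_mul_minvSqrt (hA : A.PosDef) : minvSqrt A * A * minvSqrt A = 1 :=
  calc _ = minvSqrt A * (msqrt A * msqrt A) * minvSqrt A := by rw [msqrt_mul_self hA.posSemidef]
    _ = 1 := by
      simp only [← Matrix.mul_assoc]
      rw [minvSqrt_mul_msqrt hA, Matrix.one_mul, msqrt_mul_minvSqrt hA]

theorem norm_minvSqrt_conj_le (hA : A.PosDef) (hB : B.PosSemidef)
    (M : Matrix (Fin d) (Fin d) ℝ) :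
    ‖minvSqrt B * M * minvSqrt B‖ ≤
      ‖msqrt A * B⁻¹ * msqrt A‖ * ‖minvSqrt A * M * minvSqrt A‖ := by
  set T := minvSqrt B * msqrt A
  have hT : star T = msqrt A * minvSqrt B := by
    rw [star_eq_conjTranspose, conjTranspose_mul, (isHermitian_msqrt A).eq,
      (isHermitian_minvSqrt B).eq]
  have hconj : T * (minvSqrt A * M * minvSqrt A) * star T = minvSqrt B * M * minvSqrt B :=
    calc _ = minvSqrt B * (msqrt A * minvSqrt A) * M * (minvSqrt A * msqrt A) * minvSqrt B := by
          simp only [hT, T, Matrix.mul_assoc]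
      _ = _ := by rw [msqrt_mul_minvSqrt hA, minvSqrt_mul_msqrt hA, Matrix.mul_one, Matrix.mul_one]
  have hgram : star T * T = msqrt A * B⁻¹ * msqrt A :=
    calc _ = msqrt A * (minvSqrt B * minvSqrt B) * msqrt A := by
          simp only [hT, T, Matrix.mul_assoc]
      _ = _ := by rw [minvSqrt_mul_self hB]
  rw [← hconj, ← hgram]
  exact CStarRing.norm_mul_mul_star_le _ _

theorem norm_msqrt_mul_inv_mul_msqrt_le (hA : A.PosDef) (hB : IsUnit B.det) {ε : ℝ}
    (h : ‖minvSqrt A * (B - A) * minvSqrt A‖ ≤ ε) (hε : ε < 1) :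
    ‖msqrt A * B⁻¹ * msqrt A‖ ≤ (1 - ε)⁻¹ := by
  refine norm_le_inv_one_sub_of_one_add_mul_eq_one CStarRing.norm_one_le h hε ?_
  calc (1 + minvSqrt A * (B - A) * minvSqrt A) * (msqrt A * B⁻¹ * msqrt A)
      = minvSqrt A * B * minvSqrt A * (msqrt A * B⁻¹ * msqrt A) := by
        rw [Matrix.mul_sub, Matrix.sub_mul, minvSqrt_mul_mul_minvSqrt hA, add_sub_cancel]
    _ = minvSqrt A * (B * (minvSqrt A * msqrt A) * B⁻¹) * msqrt A := by
        simp only [Matrix.mul_assoc]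
    _ = 1 := by
      rw [minvSqrt_mul_msqrt hA, Matrix.mul_one, mul_nonsing_inv _ hB, Matrix.mul_one,
        minvSqrt_mul_msqrt hA]

end MatrixSqrt

theorem decorrelation_change_bound_general {d : ℕ}
    (S Shat M : Matrix (Fin d) (Fin d) ℝ) (l ε : ℝ)
    (hS : S.PosSemidef) (hShat : Shat.PosSemidef)
    (hl : 0 < l) (hε1 : ε < 1)
    (herr : ‖minvSqrt (S + l • 1) * (Shat - S) * minvSqrt (S + l • 1)‖ ≤ ε) :
    ‖minvSqrt (Shat + l • 1) * M * minvSqrt (Shat + l • 1)‖ ≤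
      (1 - ε)⁻¹ * ‖minvSqrt (S + l • 1) * M * minvSqrt (S + l • 1)‖ := by
  have hl1 : (l • 1 : Matrix (Fin d) (Fin d) ℝ).PosDef := PosDef.one.smul hl
  have hA := PosDef.posSemidef_add hS hl1
  have hB := PosDef.posSemidef_add hShat hl1
  have hdiff : Shat + l • 1 - (S + l • 1) = Shat - S := add_sub_add_right_eq_sub _ _ _
  calc _ ≤ _ := norm_minvSqrt_conj_le hA hB.posSemidef M
    _ ≤ _ := by
      gcongr
      exact norm_msqrt_mul_inv_mul_msqrt_le hA (hB.isUnit.map detMonoidHom) (hdiff ▸ herr) hε1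

/-- Change of decorrelation matrix under closeness: if
`‖(S+λI)^{-1/2}(Ŝ−S)(S+λI)^{-1/2}‖ ≤ ε < 1`, then for any symmetric `M`,
`‖(Ŝ+λI)^{-1/2} M (Ŝ+λI)^{-1/2}‖ ≤ (1−ε)⁻¹ ‖(S+λI)^{-1/2} M (S+λI)^{-1/2}‖`. -/
theorem decorrelation_change_bound {d : ℕ}
    (S Shat M : Matrix (Fin d) (Fin d) ℝ) (l ε : ℝ)
    (hS : S.PosSemidef) (hShat : Shat.PosSemidef) (hM : M.IsHermitian)
    (hl : 0 < l) (hε0 : 0 ≤ ε) (hε1 : ε < 1)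
    (herr : ‖minvSqrt (S + l • 1) * (Shat - S) * minvSqrt (S + l • 1)‖ ≤ ε) :
    ‖minvSqrt (Shat + l • 1) * M * minvSqrt (Shat + l • 1)‖ ≤
      (1 - ε)⁻¹ * ‖minvSqrt (S + l • 1) * M * minvSqrt (S + l • 1)‖ :=
  decorrelation_change_bound_general S Shat M l ε hS hShat hl hε1 herr
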